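/- arXiv:2209.07557 — 5 statements merged into one kernel-verified Lean document; each statement's English description precedes it below -/
import Mathlib

section
/- In a minimum-length covering strategy for a tree with k robots, no robot traverses any edge of the tree more than twice. -/
/-!
If a robot crosses an edge twice in the same direction `x → y`, its walk has the form
`A x y C x y D`. Reversing the closed walk `y C x` and waiting at `x` and at `y` instead of
crossing gives the walk `A x x Cᴿ y y D`: it has the same start, visits the same vertices and is
two moves shorter, contradicting minimality. Hence each direction of an edge is used at most
once, and every edge at most twice.
-/

open Finset

variable {V : Type*}

/-- The list of consecutive steps of a walk given as a list of vertices. -/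
def wsteps (W : List V) : List (V × V) := W.zip W.tail

/-- A walk on a graph: a nonempty list of vertices in which consecutive
entries are equal or adjacent. -/
def IsWalk (G : SimpleGraph V) (W : List V) : Prop :=
  W ≠ [] ∧ ∀ p ∈ wsteps W, p.1 = p.2 ∨ G.Adj p.1 p.2

/-- The length of a walk: the number of position-changing moves. -/
def wlen [DecidableEq V] (W : List V) : ℕ :=
  (wsteps W).countP (fun p => decide (p.1 ≠ p.2))

/-- The number of times a walk traverses the edge `{x, y}` (in either direction). -/
def trav [DecidableEq V] (W : List V) (x y : V) : ℕ :=
  (wsteps W).countP (fun p => decide ((p.1 = x ∧ p.2 = y) ∨ (p.1 = y ∧ p.2 = x)))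

/-- The number of times a walk traverses the edge `(x, y)` from `x` to `y`. -/
def dirTrav [DecidableEq V] (W : List V) (x y : V) : ℕ :=
  (wsteps W).countP (fun p => decide (p.1 = x ∧ p.2 = y))

/-- A tuple of walks covers the graph: every vertex appears in some walk. -/
def Covers {k : ℕ} (S : Fin k → List V) : Prop := ∀ v : V, ∃ i, v ∈ S i

/-- The total length of a strategy: the sum of the lengths of the walks. -/
def slen [DecidableEq V] {k : ℕ} (S : Fin k → List V) : ℕ := ∑ i, wlen (S i)

/-- A minimum-length covering strategy: a tuple of walks covering all vertices whose
total length is no larger than that of any covering strategy with the same starts. -/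
def IsMinCover [DecidableEq V] (G : SimpleGraph V) {k : ℕ} (S : Fin k → List V) : Prop :=
  (∀ i, IsWalk G (S i)) ∧ Covers S ∧
    ∀ S' : Fin k → List V, (∀ i, IsWalk G (S' i)) → Covers S' →
      (∀ i, (S' i).head? = (S i).head?) → slen S ≤ slen S'

lemma List.countP_or_le {α : Type*} (p q : α → Bool) (l : List α) :
    l.countP (fun a => p a || q a) ≤ l.countP p + l.countP q := by
  induction l with
  | nil => simp
  | cons a l ih =>
    simp only [List.countP_cons]
    cases p a <;> cases q a <;> simp <;> omega

@[simp]
lemma wsteps_cons_cons (a b : V) (l : List V) :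
    wsteps (a :: b :: l) = (a, b) :: wsteps (b :: l) := rfl

lemma wsteps_append_cons (P : List V) (v : V) (Q : List V) :
    wsteps (P ++ v :: Q) = wsteps (P ++ [v]) ++ wsteps (v :: Q) := by
  induction P with
  | nil => rfl
  | cons a P ih =>
    cases P with
    | nil => rfl
    | cons b P => simpa using ih

lemma wsteps_append_singleton (P : List V) (a : V) :
    wsteps (P ++ [a]) = wsteps P ++ (P.getLast?.map (·, a)).toList := by
  induction P with
  | nil => rfl
  | cons b P ih =>
    cases P with
    | nil => rfl
    | cons c P => simpa [List.getLast?_cons] using ih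

lemma wsteps_reverse (l : List V) :
    wsteps l.reverse = ((wsteps l).map Prod.swap).reverse := by
  induction l with
  | nil => rfl
  | cons a l ih =>
    cases l with
    | nil => rfl
    | cons b l =>
      rw [List.reverse_cons, wsteps_append_singleton, ih]
      simp [List.getLast?_reverse]

lemma dirTrav_eq_count [DecidableEq V] (W : List V) (x y : V) :
    dirTrav W x y = (wsteps W).count (x, y) := by
  rw [dirTrav, List.count]
  exact List.countP_congr fun p _ => by simp [Prod.ext_iff]

lemma trav_le_dirTrav_add_dirTrav [DecidableEq V] (W : List V) (x y : V) :
    trav W x y ≤ dirTrav W x y + dirTrav W y x := by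
  simpa only [trav, dirTrav, Bool.decide_or] using List.countP_or_le _ _ (wsteps W)

lemma exists_eq_append_of_mem_wsteps {x y : V} :
    ∀ {W : List V}, (x, y) ∈ wsteps W → ∃ A B, W = A ++ x :: y :: B
  | [], h | [_], h => by simp [wsteps] at h
  | a :: b :: W, h => by
    rcases List.mem_cons.mp h with h | h
    · obtain ⟨rfl, rfl⟩ := Prod.mk.inj h
      exact ⟨[], W, rfl⟩
    · obtain ⟨A, B, hW⟩ := exists_eq_append_of_mem_wsteps h
      exact ⟨a :: A, B, by rw [hW]; rfl⟩

lemma exists_eq_append_of_two_le_dirTrav [DecidableEq V] {x y : V} (hxy : x ≠ y) :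
    ∀ {W : List V}, 2 ≤ dirTrav W x y → ∃ A C D, W = A ++ x :: y :: C ++ x :: y :: D
  | [], h | [_], h => by simp [dirTrav, wsteps] at h
  | a :: b :: W, h => by
    rw [dirTrav_eq_count, wsteps_cons_cons] at h
    by_cases hab : (a, b) = (x, y)
    · obtain ⟨rfl, rfl⟩ := Prod.mk.inj hab
      rw [List.count_cons_self] at h
      obtain ⟨_ | ⟨c, C⟩, D, hW⟩ :=
        exists_eq_append_of_mem_wsteps (x := a) (y := b) (W := b :: W)
          (List.count_pos_iff.mp (by omega))
      · exact absurd (List.cons.inj hW).1 hxy.symm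
      · obtain ⟨rfl, rfl⟩ := List.cons.inj hW
        exact ⟨[], C, D, by simp⟩
    · rw [List.count_cons_of_ne hab] at h
      obtain ⟨A, C, D, hW⟩ :=
        exists_eq_append_of_two_le_dirTrav hxy (W := b :: W) (by rwa [dirTrav_eq_count])
      exact ⟨a :: A, C, D, by rw [hW]; rfl⟩

lemma wsteps_two_crossings (A C D : List V) (x y : V) :
    wsteps (A ++ x :: y :: C ++ x :: y :: D) =
      wsteps (A ++ [x]) ++ (x, y) :: (wsteps (y :: C ++ [x]) ++ (x, y) :: wsteps (y :: D)) := by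
  conv_lhs => rw [List.append_assoc, List.cons_append, List.cons_append, wsteps_append_cons A,
    wsteps_cons_cons, ← List.cons_append, wsteps_append_cons (y :: C), wsteps_cons_cons]

lemma wsteps_reversed_loop (A C D : List V) (x y : V) :
    wsteps (A ++ x :: x :: C.reverse ++ y :: y :: D) =
      wsteps (A ++ [x]) ++ (x, x) ::
        (((wsteps (y :: C ++ [x])).map Prod.swap).reverse ++ (y, y) :: wsteps (y :: D)) := by
  conv_lhs => rw [List.append_assoc, List.cons_append, List.cons_append, wsteps_append_cons A,
    wsteps_cons_cons, ← List.cons_append, wsteps_append_cons (x :: C.reverse), wsteps_cons_cons]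
  rw [← wsteps_reverse]
  simp

section Walks

variable {G : SimpleGraph V}

lemma IsWalk.reverse_loop {A C D : List V} {x y : V}
    (hW : IsWalk G (A ++ x :: y :: C ++ x :: y :: D)) :
    IsWalk G (A ++ x :: x :: C.reverse ++ y :: y :: D) := by
  refine ⟨by simp, fun p hp => ?_⟩
  have hsteps := hW.2
  rw [wsteps_two_crossings] at hsteps
  rw [wsteps_reversed_loop] at hp
  simp only [List.mem_append, List.mem_cons, List.mem_reverse, List.mem_map] at hp hsteps
  rcases hp with hp | rfl | ⟨q, hq, rfl⟩ | rfl | hp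
  · exact hsteps p (.inl hp)
  · exact .inl rfl
  · exact (hsteps q (.inr (.inr (.inl hq)))).imp Eq.symm G.adj_symm
  · exact .inl rfl
  · exact hsteps p (.inr (.inr (.inr (.inr hp))))

lemma wlen_reverse_loop [DecidableEq V] (A C D : List V) {x y : V} (hxy : x ≠ y) :
    wlen (A ++ x :: x :: C.reverse ++ y :: y :: D) + 2 =
      wlen (A ++ x :: y :: C ++ x :: y :: D) := by
  have hswap : ∀ l : List (V × V), l.countP ((fun p => decide (p.1 ≠ p.2)) ∘ Prod.swap) =
      l.countP (fun p => decide (p.1 ≠ p.2)) :=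
    fun l => List.countP_congr fun p _ => by simp [ne_comm]
  simp only [wlen, wsteps_reversed_loop, wsteps_two_crossings, List.countP_append,
    List.countP_cons, List.countP_reverse, List.countP_map, hswap]
  simp [hxy]
  omega

lemma slen_update [DecidableEq V] {k : ℕ} (S : Fin k → List V) (i : Fin k) (W : List V) :
    slen (Function.update S i W) + wlen (S i) = slen S + wlen W := by
  simp only [slen, Fintype.sum_eq_add_sum_compl i, Function.update_self]
  have hrest : ∑ j ∈ {i}ᶜ, wlen (Function.update S i W j) = ∑ j ∈ {i}ᶜ, wlen (S j) :=
    Finset.sum_congr rfl fun j hj => by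
      rw [Function.update_of_ne (by simpa using hj)]
  omega

lemma IsMinCover.wlen_le [DecidableEq V] {k : ℕ} {S : Fin k → List V} (hS : IsMinCover G S)
    (i : Fin k) {W : List V} (hW : IsWalk G W) (hhead : W.head? = (S i).head?)
    (hsub : S i ⊆ W) : wlen (S i) ≤ wlen W := by
  have hmin := hS.2.2 (Function.update S i W)
    (fun j => by rcases eq_or_ne j i with rfl | hj <;> simp [*, hS.1 j])
    (fun v => by
      obtain ⟨j, hj⟩ := hS.2.1 v
      rcases eq_or_ne j i with rfl | hji
      · exact ⟨j, by simpa using hsub hj⟩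
      · exact ⟨j, by simpa [hji] using hj⟩)
    (fun j => by rcases eq_or_ne j i with rfl | hj <;> simp [*])
  have := slen_update S i W
  omega

lemma IsMinCover.dirTrav_le_one [DecidableEq V] {k : ℕ} {S : Fin k → List V}
    (hS : IsMinCover G S) (i : Fin k) {x y : V} (hxy : x ≠ y) : dirTrav (S i) x y ≤ 1 := by
  by_contra! h
  obtain ⟨A, C, D, hSi⟩ := exists_eq_append_of_two_le_dirTrav hxy h
  have hW := hSi ▸ hS.1 i
  have hle := hS.wlen_le i hW.reverse_loop (by rw [hSi]; cases A <;> rfl)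
    (by rw [hSi]; intro v; simp only [List.mem_append, List.mem_cons, List.mem_reverse]; tauto)
  have := wlen_reverse_loop A C D hxy
  rw [hSi] at hle
  omega

end Walks

theorem stmt0_general {V : Type*} [DecidableEq V] (G : SimpleGraph V)
    {k : ℕ} (S : Fin k → List V) (hS : IsMinCover G S) :
    ∀ (i : Fin k) (x y : V), G.Adj x y → trav (S i) x y ≤ 2 := by
  intro i x y hadj
  calc trav (S i) x y ≤ dirTrav (S i) x y + dirTrav (S i) y x := trav_le_dirTrav_add_dirTrav _ x y
    _ ≤ 1 + 1 := add_le_add (hS.dirTrav_le_one i hadj.ne) (hS.dirTrav_le_one i hadj.ne.symm)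

/-- In a minimum-length covering strategy for a tree with k robots,
no robot traverses any edge of the tree more than twice. -/
theorem stmt0 {V : Type*} [Fintype V] [DecidableEq V] (G : SimpleGraph V) (hT : G.IsTree)
    {k : ℕ} (S : Fin k → List V) (hS : IsMinCover G S) :
    ∀ (i : Fin k) (x y : V), G.Adj x y → trav (S i) x y ≤ 2 :=
  stmt0_general G S hS
end

section
/- If W = (Q_1, v, w, Q_2, w, v, Q_3, v, w, Q_4) is a walk on a tree traversing the edge (v,w) at least three times, then W' = (Q_1, v, Q_3, v, w, Q_2, w, Q_4) is also a walk visiting the same set of vertices as W, and l(W') = l(W) - 2. -/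
open Finset

variable {V : Type*}

set_option linter.unusedVariables false

lemma wsteps_cons2 (a b : V) (l : List V) : wsteps (a :: b :: l) = (a,b) :: wsteps (b :: l) := rfl

lemma wsteps_split (A B : List V) (x : V) :
    wsteps (A ++ x :: B) = wsteps (A ++ [x]) ++ wsteps (x :: B) := by
  induction A with
  | nil => simp [wsteps]
  | cons a A ih =>
    cases A with
    | nil => simp [wsteps]
    | cons b A' =>
      simp only [List.cons_append, wsteps_cons2] at *
      simp [ih]

/-- Exchange argument: if a walk traverses the edge (v,w) three times as
W = (Q₁,v,w,Q₂,w,v,Q₃,v,w,Q₄), then W' = (Q₁,v,Q₃,v,w,Q₂,w,Q₄) is a walk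
visiting the same vertices with length two less. -/
theorem stmt1 {V : Type*} [DecidableEq V] (G : SimpleGraph V) (hT : G.IsTree)
    (v w : V) (hvw : G.Adj v w) (Q1 Q2 Q3 Q4 : List V)
    (hW : IsWalk G (Q1 ++ [v, w] ++ Q2 ++ [w, v] ++ Q3 ++ [v, w] ++ Q4)) :
    IsWalk G (Q1 ++ [v] ++ Q3 ++ [v, w] ++ Q2 ++ [w] ++ Q4) ∧
    (∀ x : V, x ∈ Q1 ++ [v] ++ Q3 ++ [v, w] ++ Q2 ++ [w] ++ Q4 ↔
      x ∈ Q1 ++ [v, w] ++ Q2 ++ [w, v] ++ Q3 ++ [v, w] ++ Q4) ∧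
    wlen (Q1 ++ [v] ++ Q3 ++ [v, w] ++ Q2 ++ [w] ++ Q4) =
      wlen (Q1 ++ [v, w] ++ Q2 ++ [w, v] ++ Q3 ++ [v, w] ++ Q4) - 2 := by
  have hne : v ≠ w := hvw.ne
  -- decomposition of the original walk W
  have dW : wsteps (Q1 ++ [v, w] ++ Q2 ++ [w, v] ++ Q3 ++ [v, w] ++ Q4) =
      wsteps (Q1 ++ [v]) ++ ((v,w) :: (wsteps ((w :: Q2) ++ [w]) ++
        ((w,v) :: (wsteps ((v :: Q3) ++ [v]) ++ ((v,w) :: wsteps (w :: Q4)))))) := by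
    have e1 : wsteps (Q1 ++ [v, w] ++ Q2 ++ [w, v] ++ Q3 ++ [v, w] ++ Q4) =
        wsteps (Q1 ++ v :: ((w :: Q2) ++ w :: ((v :: Q3) ++ v :: w :: Q4))) := by
      simp
    rw [e1, wsteps_split Q1 _ v]
    have e2 : wsteps (v :: ((w :: Q2) ++ w :: ((v :: Q3) ++ v :: w :: Q4))) =
        wsteps ((v :: w :: Q2) ++ w :: ((v :: Q3) ++ v :: w :: Q4)) := rfl
    rw [e2, wsteps_split (v :: w :: Q2) _ w]
    have e3 : wsteps ((v :: w :: Q2) ++ [w]) = (v, w) :: wsteps ((w :: Q2) ++ [w]) := rfl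
    have e4 : wsteps (w :: ((v :: Q3) ++ v :: w :: Q4)) =
        wsteps ((w :: v :: Q3) ++ v :: w :: Q4) := rfl
    rw [e3, e4, wsteps_split (w :: v :: Q3) _ v]
    have e5 : wsteps ((w :: v :: Q3) ++ [v]) = (w, v) :: wsteps ((v :: Q3) ++ [v]) := rfl
    have e6 : wsteps (v :: w :: Q4) = (v, w) :: wsteps (w :: Q4) := rfl
    rw [e5, e6]
    simp
  -- decomposition of the new walk W'
  have dW' : wsteps (Q1 ++ [v] ++ Q3 ++ [v, w] ++ Q2 ++ [w] ++ Q4) =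
      wsteps (Q1 ++ [v]) ++ (wsteps ((v :: Q3) ++ [v]) ++
        ((v,w) :: (wsteps ((w :: Q2) ++ [w]) ++ wsteps (w :: Q4)))) := by
    have e1 : wsteps (Q1 ++ [v] ++ Q3 ++ [v, w] ++ Q2 ++ [w] ++ Q4) =
        wsteps (Q1 ++ v :: (Q3 ++ v :: ((w :: Q2) ++ w :: Q4))) := by
      simp
    rw [e1, wsteps_split Q1 _ v]
    have e2 : wsteps (v :: (Q3 ++ v :: ((w :: Q2) ++ w :: Q4))) =
        wsteps ((v :: Q3) ++ v :: ((w :: Q2) ++ w :: Q4)) := rfl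
    rw [e2, wsteps_split (v :: Q3) _ v]
    have e3 : wsteps (v :: ((w :: Q2) ++ w :: Q4)) =
        wsteps ((v :: w :: Q2) ++ w :: Q4) := rfl
    rw [e3, wsteps_split (v :: w :: Q2) _ w]
    have e4 : wsteps ((v :: w :: Q2) ++ [w]) = (v, w) :: wsteps ((w :: Q2) ++ [w]) := rfl
    rw [e4]
    simp
  obtain ⟨-, hstep⟩ := hW
  rw [dW] at hstep
  refine ⟨⟨by simp, ?_⟩, ?_, ?_⟩
  · intro p hp
    rw [dW'] at hp
    simp only [List.mem_append, List.mem_cons] at hp hstep ⊢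
    rcases hp with h | h | h | h | h
    · exact hstep p (by tauto)
    · exact hstep p (by tauto)
    · subst h; exact Or.inr hvw
    · exact hstep p (by tauto)
    · exact hstep p (by tauto)
  · intro x
    simp only [List.mem_append, List.mem_cons, List.mem_singleton, List.not_mem_nil]
    tauto
  · rw [wlen, wlen, dW, dW']
    have h1 : (decide (v = w)) = false := by simp [hne]
    have h2 : (decide (w = v)) = false := by simp [hne.symm]
    simp [List.countP_append, List.countP_cons, h1, h2]
    omega
end

section
/- Let A = {a_1,...,a_{3m}} with B/4 < a_i < B/2 for all i and Σ a_i = mB. Construct a tree T as the union of 3m paths P_1,...,P_{3m} from a common vertex u with l(P_i) = a_i, and m paths Q_1,...,Q_m from u each of length L = 2Σ a_i. If A admits a 3-partition into m triples each summing to B, then T has a covering strategy with m robots all starting at u of time at most L + 2B. -/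
/-!
Given a 3-partition, robot `j` starts at `u`, runs out and back along each of the three paths
`Pᵢ` of its triple, which costs `2B` moves, and then walks out along its own long path `Qⱼ`,
which costs `L = 2mB`. Between the stretches it is back at `u`, so the concatenation is a walk.
-/

open Finset

variable {V : Type*}

/-- A 3-partition of the multiset a into m triples each summing to B. -/
def ThreePartition (m B : ℕ) (a : Fin (3 * m) → ℕ) : Prop :=
  ∃ f : Fin (3 * m) → Fin m,
    (∀ j : Fin m, (Finset.univ.filter (fun i => f i = j)).card = 3) ∧
    (∀ j : Fin m, ∑ i ∈ Finset.univ.filter (fun i => f i = j), a i = B)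

theorem List.IsChain.rel_of_mem_zip_tail {α : Type*} {R : α → α → Prop} :
    ∀ {l : List α}, l.IsChain R → ∀ {x y : α}, (x, y) ∈ l.zip l.tail → R x y
  | [], _, _, _, h | [_], _, _, _, h => by simp at h
  | _ :: b :: l, hl, _, _, h => by
    rw [List.isChain_cons_cons] at hl
    rcases List.mem_cons.mp h with h | h
    · cases h; exact hl.1
    · exact hl.2.rel_of_mem_zip_tail h

theorem isWalk_of_isChain {G : SimpleGraph V} {W : List V} (hW : W ≠ []) (h : W.IsChain G.Adj) :
    IsWalk G W :=
  ⟨hW, fun _ hp => .inr (h.rel_of_mem_zip_tail hp)⟩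

section RoundTrip

variable {R : V → V → Prop} {u : V}

/-- The start `u` is not part of `l`, so that round trips from `u` compose by `++`. -/
def IsRoundTrip (R : V → V → Prop) (u : V) (l : List V) : Prop :=
  (u :: l).IsChain R ∧ (u :: l).getLast? = some u

theorem IsRoundTrip.isChain_cons_append {l l' : List V} (hl : IsRoundTrip R u l)
    (hl' : (u :: l').IsChain R) : (u :: (l ++ l')).IsChain R := by
  rw [← List.cons_append]
  refine hl.1.append hl'.tail fun x hx y hy => ?_
  rw [hl.2, Option.mem_some_iff] at hx
  exact hx ▸ hl'.rel_head? hy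

theorem isChain_cons_flatten_append {ls : List (List V)} (hls : ∀ l ∈ ls, IsRoundTrip R u l)
    {l' : List V} (hl' : (u :: l').IsChain R) : (u :: (ls.flatten ++ l')).IsChain R := by
  induction ls with
  | nil => exact hl'
  | cons l ls ih =>
    rw [List.flatten_cons, List.append_assoc]
    exact (hls l List.mem_cons_self).isChain_cons_append
      (ih fun l hl => hls l (List.mem_cons_of_mem _ hl))

def outAndBack (p : List V) : List V := p.tail ++ p.reverse.tail

theorem length_outAndBack (p : List V) : (outAndBack p).length = 2 * (p.length - 1) := by
  simp only [outAndBack, List.length_append, List.length_tail, List.length_reverse]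
  omega

theorem subset_cons_outAndBack {p : List V} (hp : p.head? = some u) :
    p ⊆ u :: outAndBack p := by
  obtain ⟨t, rfl⟩ : ∃ t, p = u :: t := ⟨_, List.eq_cons_of_mem_head? hp⟩
  simp [outAndBack]

theorem isRoundTrip_outAndBack [Std.Symm R] {p : List V} (hp : p.head? = some u)
    (hR : p.IsChain R) : IsRoundTrip R u (outAndBack p) := by
  obtain ⟨t, rfl⟩ : ∃ t, p = u :: t := ⟨_, List.eq_cons_of_mem_head? hp⟩
  obtain ⟨x, r, hxr⟩ : ∃ x r, (u :: t).reverse = x :: r :=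
    List.exists_cons_of_ne_nil (by simp)
  have hpr : u :: t = r.reverse ++ [x] := by
    rw [← List.reverse_cons, ← hxr, List.reverse_reverse]
  have hrev : (x :: r).IsChain R := by
    rw [← hxr, List.isChain_reverse]
    exact hR.imp fun _ _ => Std.Symm.symm _ _
  have key : u :: outAndBack (u :: t) = r.reverse ++ [x] ++ r := by
    rw [outAndBack, List.tail_cons, ← List.cons_append, hxr, List.tail_cons, hpr]
  rw [IsRoundTrip, key]
  refine ⟨(hpr ▸ hR).append_overlap hrev (List.cons_ne_nil x []), ?_⟩
  rw [List.append_assoc, List.singleton_append,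
    List.getLast?_append_of_ne_nil _ (List.cons_ne_nil x r), ← hxr, List.getLast?_reverse,
    List.head?_cons]

end RoundTrip

theorem stmt12_general {V : Type*} (G : SimpleGraph V)
    (m B : ℕ) (a : Fin (3 * m) → ℕ)
    (u : V) (P : Fin (3 * m) → List V) (Q : Fin m → List V)
    (hPpath : ∀ i, (P i).Nodup ∧ (P i).Chain' G.Adj ∧ (P i).head? = some u ∧
      (P i).length = a i + 1)
    (hQpath : ∀ j, (Q j).Nodup ∧ (Q j).Chain' G.Adj ∧ (Q j).head? = some u ∧
      (Q j).length = 2 * m * B + 1)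
    (hcov : ∀ x : V, (∃ i, x ∈ P i) ∨ (∃ j, x ∈ Q j))
    (hpart : ThreePartition m B a) :
    ∃ S : Fin m → List V, (∀ i, IsWalk G (S i)) ∧ Covers S ∧
      (∀ i, (S i).head? = some u) ∧
      (∀ i, (S i).length - 1 ≤ 2 * m * B + 2 * B) := by
  obtain ⟨f, -, hf⟩ := hpart
  have hQ j : Q j = u :: (Q j).tail := List.eq_cons_of_mem_head? (hQpath j).2.2.1
  let tour (j : Fin m) : List V := ((univ.filter (f · = j)).toList.map (outAndBack ∘ P)).flatten
  have mem_tour {i v} (hv : v ∈ outAndBack (P i)) : v ∈ tour (f i) :=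
    List.mem_flatten.mpr ⟨_, List.mem_map_of_mem (by simp), hv⟩
  have length_tour j : (tour j).length = 2 * B := by
    simp only [tour, List.length_flatten, List.map_map, Function.comp_def, length_outAndBack,
      (hPpath _).2.2.2, Nat.add_sub_cancel, sum_map_toList, ← mul_sum, hf j]
  refine ⟨fun j => u :: (tour j ++ (Q j).tail), fun j => ?_, fun v => ?_, fun j => rfl, fun j => ?_⟩
  · have := G.symm
    refine isWalk_of_isChain (List.cons_ne_nil _ _) (isChain_cons_flatten_append ?_ ?_)
    · simp only [List.mem_map, Function.comp_apply]
      rintro _ ⟨i, -, rfl⟩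
      exact isRoundTrip_outAndBack (hPpath i).2.2.1 (hPpath i).2.1
    · exact hQ j ▸ (hQpath j).2.1
  · rcases hcov v with ⟨i, hv⟩ | ⟨j, hv⟩
    · exact ⟨f i, List.cons_subset_cons u (fun _ hw => List.mem_append_left _ (mem_tour hw))
        (subset_cons_outAndBack (hPpath i).2.2.1 hv)⟩
    · exact ⟨j, List.cons_subset_cons u (List.subset_append_right _ _) (hQ j ▸ hv)⟩
  · simp only [List.length_cons, List.length_append, length_tour, List.length_tail,
      (hQpath j).2.2.2]
    omega

/-- MTCP reduction, forward direction: if A admits a 3-partition, the star of the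
3m paths Pᵢ (of lengths aᵢ) and the m paths Qⱼ (of length L = 2Σaᵢ = 2mB) has a
covering strategy with m robots starting at u of time at most L + 2B. -/
theorem stmt12 {V : Type*} [Fintype V] [DecidableEq V] (G : SimpleGraph V) (hT : G.IsTree)
    (m B : ℕ) (hm : 1 ≤ m) (a : Fin (3 * m) → ℕ)
    (ha : ∀ i, B < 4 * a i ∧ 2 * a i < B) (hsum : ∑ i, a i = m * B)
    (u : V) (P : Fin (3 * m) → List V) (Q : Fin m → List V)
    (hPpath : ∀ i, (P i).Nodup ∧ (P i).Chain' G.Adj ∧ (P i).head? = some u ∧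
      (P i).length = a i + 1)
    (hQpath : ∀ j, (Q j).Nodup ∧ (Q j).Chain' G.Adj ∧ (Q j).head? = some u ∧
      (Q j).length = 2 * m * B + 1)
    (hPP : ∀ i j, i ≠ j → ∀ x, x ∈ P i → x ∈ P j → x = u)
    (hPQ : ∀ i j, ∀ x, x ∈ P i → x ∈ Q j → x = u)
    (hQQ : ∀ i j, i ≠ j → ∀ x, x ∈ Q i → x ∈ Q j → x = u)
    (hcov : ∀ x : V, (∃ i, x ∈ P i) ∨ (∃ j, x ∈ Q j))
    (hpart : ThreePartition m B a) :
    ∃ S : Fin m → List V, (∀ i, IsWalk G (S i)) ∧ Covers S ∧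
      (∀ i, (S i).head? = some u) ∧
      (∀ i, (S i).length - 1 ≤ 2 * m * B + 2 * B) :=
  stmt12_general G m B a u P Q hPpath hQpath hcov hpart
end

section
/- Let A = {a_1,...,a_{3m}} with B/4 < a_i < B/2 for all i and Σ a_i = mB, and let T be the tree formed by 3m paths P_i of length a_i and m paths Q_1,...,Q_m of length L = 2mB, all starting from a common vertex u. If T has a covering strategy with m robots all starting at u of time at most L + 2B, then A admits a 3-partition into m triples each summing to B. -/
/-!
Measure a position in the tree by its depth `armDepth A c v` along each arm `c`. Since an edge
of a tree joins consecutive vertices of a single arm, a step of a walk changes the depth on at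
most one arm, and by at most one. A robot that reaches the end of arm `c` and stops at `z` thus
spends at least `2 len c - depth_c z` steps changing the depth on `c`, and `z` has positive depth
on one arm only; so the arms whose ends one robot reaches have total length at most
`(time + L) / 2`, where `L = 2mB` bounds every arm. With time `L + 2B` no robot reaches the ends
of two arms `Qⱼ`, so each robot reaches exactly one, and then the arms `Pᵢ` whose ends it reaches
have total length at most `B`. As the `aᵢ` add up to `mB`, each robot gets exactly `B`, and
`B/4 < aᵢ < B/2` forces exactly three `aᵢ` per robot.
-/

open Finset

variable {V : Type*}

theorem List.length_take_idxOf_succ {α : Type*} [BEq α] [LawfulBEq α] {l : List α} {x : α}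
    (hx : x ∈ l) : (l.take (l.idxOf x + 1)).length = l.idxOf x + 1 := by
  simp [List.idxOf_lt_length_of_mem hx]

theorem List.getLast?_take_idxOf_succ {α : Type*} [BEq α] [LawfulBEq α] {l : List α} {x : α}
    (hx : x ∈ l) : (l.take (l.idxOf x + 1)).getLast? = some x := by
  simp [List.getLast?_take, List.getElem?_idxOf hx]

namespace SimpleGraph

variable {G : SimpleGraph V}

theorem IsAcyclic.eq_of_isChain_of_nodup (hG : G.IsAcyclic) {l₁ l₂ : List V}
    (hc₁ : l₁.IsChain G.Adj) (hc₂ : l₂.IsChain G.Adj) (hn₁ : l₁.Nodup) (hn₂ : l₂.Nodup)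
    (hne : l₁ ≠ []) (hhead : l₁.head? = l₂.head?) (hlast : l₁.getLast? = l₂.getLast?) :
    l₁ = l₂ := by
  have hne₂ : l₂ ≠ [] := by rintro rfl; simp [hne] at hhead
  have hh : l₁.head hne = l₂.head hne₂ := by
    simpa [List.head?_eq_some_head hne, List.head?_eq_some_head hne₂] using hhead
  have hl : l₁.getLast hne = l₂.getLast hne₂ := by
    simpa [List.getLast?_eq_some_getLast hne, List.getLast?_eq_some_getLast hne₂] using hlast
  let p₁ := Walk.ofSupport l₁ hne hc₁
  let p₂ := (Walk.ofSupport l₂ hne₂ hc₂).copy hh.symm hl.symm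
  have hp₁ : p₁.IsPath := (Walk.isPath_def _).2 (by simpa [p₁] using hn₁)
  have hp₂ : p₂.IsPath := (Walk.isPath_def _).2 (by simpa [p₂] using hn₂)
  have := (hG.subsingleton_path _ _).elim ⟨p₁, hp₁⟩ ⟨p₂, hp₂⟩
  simpa [p₁, p₂] using congrArg (fun p : G.Path _ _ => p.1.support) this

theorem IsAcyclic.take_idxOf_succ_eq_append [DecidableEq V] (hG : G.IsAcyclic) {l₁ l₂ : List V}
    (hc₁ : l₁.IsChain G.Adj) (hc₂ : l₂.IsChain G.Adj) (hn₁ : l₁.Nodup) (hn₂ : l₂.Nodup)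
    (hhead : l₁.head? = l₂.head?) {x y : V} (hx : x ∈ l₁) (hy : y ∈ l₂) (hxy : G.Adj x y)
    (hyx : y ∉ l₁.take (l₁.idxOf x + 1)) :
    l₂.take (l₂.idxOf y + 1) = l₁.take (l₁.idxOf x + 1) ++ [y] := by
  refine hG.eq_of_isChain_of_nodup (hc₂.take _) ?_ (hn₂.sublist (List.take_sublist _ _)) ?_
    (by simp [List.take_eq_nil_iff, List.ne_nil_of_mem hy]) ?_ ?_
  · refine (hc₁.take _).append (List.isChain_singleton y) ?_
    intro a ha b hb
    rw [List.getLast?_take_idxOf_succ hx, Option.mem_some_iff] at ha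
    rw [List.head?_cons, Option.mem_some_iff] at hb
    exact ha ▸ hb ▸ hxy
  · exact (hn₁.sublist (List.take_sublist _ _)).append (List.nodup_singleton y)
      (List.disjoint_singleton.2 hyx)
  · obtain ⟨b, l, rfl⟩ := List.exists_cons_of_ne_nil (List.ne_nil_of_mem hy)
    simp [List.head?_take, List.head?_append, hhead]
  · rw [List.getLast?_take_idxOf_succ hy, List.getLast?_concat]

end SimpleGraph

section StepCounting

variable {α β : Type*}

def numChanges [DecidableEq β] (φ : α → β) (W : List α) : ℕ :=
  (wsteps W).countP (fun p => decide (φ p.1 ≠ φ p.2))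

theorem wlen_le_length_sub_one [DecidableEq α] (W : List α) : wlen W ≤ W.length - 1 :=
  List.countP_le_length.trans (by simp [wsteps])

theorem wsteps_cons_cons_s13 (x y : α) (l : List α) :
    wsteps (x :: y :: l) = (x, y) :: wsteps (y :: l) := rfl

theorem wsteps_append_cons_s13 : ∀ (l₁ : List α) (y : α) (l₂ : List α),
    wsteps (l₁ ++ y :: l₂) = wsteps (l₁ ++ [y]) ++ wsteps (y :: l₂)
  | [], _, _ => rfl
  | [_], _, _ => rfl
  | x :: x' :: l₁, y, l₂ => by
    simpa only [List.cons_append, wsteps_cons_cons_s13] using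
      congrArg ((x, x') :: ·) (wsteps_append_cons_s13 (x' :: l₁) y l₂)

theorem le_numChanges_add (φ : α → ℕ) : ∀ {W : List α} {x z : α},
    (∀ p ∈ wsteps W, φ p.1 ≤ φ p.2 + 1 ∧ φ p.2 ≤ φ p.1 + 1) →
    W.head? = some x → W.getLast? = some z →
    φ x ≤ numChanges φ W + φ z ∧ φ z ≤ numChanges φ W + φ x
  | [], _, _, _, hx, _ => by simp at hx
  | [_], _, _, _, hx, hz => by
    simp only [List.head?_cons, List.getLast?_singleton, Option.some.injEq] at hx hz
    subst hx hz
    omega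
  | a :: b :: W, x, z, hΔ, hx, hz => by
    simp only [List.head?_cons, Option.some.injEq] at hx
    subst hx
    rw [List.getLast?_cons_cons] at hz
    have ih := le_numChanges_add φ (fun p hp => hΔ p (by simp [wsteps_cons_cons_s13, hp])) rfl hz
    have hab := hΔ (a, b) (by simp [wsteps_cons_cons_s13])
    simp only [numChanges, wsteps_cons_cons_s13, List.countP_cons] at ih ⊢
    split <;> grind

theorem two_mul_le_numChanges_add (φ : α → ℕ) {W : List α} {u v z : α}
    (hΔ : ∀ p ∈ wsteps W, φ p.1 ≤ φ p.2 + 1 ∧ φ p.2 ≤ φ p.1 + 1)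
    (hu : W.head? = some u) (hφu : φ u = 0) (hv : v ∈ W) (hz : W.getLast? = some z) :
    2 * φ v ≤ numChanges φ W + φ z := by
  obtain ⟨s, t, rfl⟩ := List.append_of_mem hv
  have hsplit := wsteps_append_cons_s13 s v t
  have h₁ := le_numChanges_add φ (W := s ++ [v]) (x := u) (z := v)
    (fun p hp => hΔ p (by rw [hsplit]; exact List.mem_append_left _ hp))
    (by cases s <;> simpa using hu) (List.getLast?_concat ..)
  have h₂ := le_numChanges_add φ (W := v :: t) (x := v) (z := z)
    (fun p hp => hΔ p (by rw [hsplit]; exact List.mem_append_right _ hp))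
    rfl (by rwa [List.getLast?_append_cons] at hz)
  simp only [numChanges, hsplit, List.countP_append] at h₁ h₂ ⊢
  omega

theorem sum_countP_ne_le_countP_ne {ι : Type*} [DecidableEq α] [DecidableEq β]
    (φ : ι → α → β) (D : Finset ι) (l : List (α × α))
    (h : ∀ p ∈ l, ∀ c ∈ D, ∀ c' ∈ D, φ c p.1 ≠ φ c p.2 → φ c' p.1 ≠ φ c' p.2 → c = c') :
    ∑ c ∈ D, l.countP (fun p => decide (φ c p.1 ≠ φ c p.2)) ≤
      l.countP (fun p => decide (p.1 ≠ p.2)) := by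
  induction l with
  | nil => simp
  | cons p l ih =>
    simp only [List.countP_cons, Finset.sum_add_distrib]
    have hp : ∑ c ∈ D, (if decide (φ c p.1 ≠ φ c p.2) then 1 else 0) ≤
        if decide (p.1 ≠ p.2) then 1 else 0 := by
      rw [Finset.sum_boole]
      by_cases hp : p.1 = p.2
      · simp [hp]
      · simpa [hp, Finset.card_le_one] using fun c hc hφc c' hc' hφc' =>
          h p List.mem_cons_self c hc c' hc' hφc hφc'
    have := ih fun q hq => h q (List.mem_cons_of_mem p hq)
    omega

theorem sum_numChanges_le_wlen {ι : Type*} [DecidableEq α] [DecidableEq β]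
    (φ : ι → α → β) (D : Finset ι) (W : List α)
    (h : ∀ p ∈ wsteps W, ∀ c ∈ D, ∀ c' ∈ D, φ c p.1 ≠ φ c p.2 → φ c' p.1 ≠ φ c' p.2 → c = c') :
    ∑ c ∈ D, numChanges (φ c) W ≤ wlen W :=
  sum_countP_ne_le_countP_ne φ D (wsteps W) h

end StepCounting

/-- For acyclic `G` this says that `G` is a spider (a subdivided star) with centre `u` and
legs `A c`, each listed from `u` outwards. -/
structure IsSpider {ι : Type*} (G : SimpleGraph V) (u : V) (A : ι → List V) : Prop where
  nodup : ∀ c, (A c).Nodup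
  isChain : ∀ c, (A c).IsChain G.Adj
  head? : ∀ c, (A c).head? = some u
  eq_of_mem : ∀ c c', c ≠ c' → ∀ v ∈ A c, v ∈ A c' → v = u
  cover : ∀ v, ∃ c, v ∈ A c

theorem IsSpider.sum_elim {ι κ : Type*} {G : SimpleGraph V} {u : V} {P : ι → List V}
    {Q : κ → List V} (hP : ∀ i, (P i).Nodup ∧ (P i).IsChain G.Adj ∧ (P i).head? = some u)
    (hQ : ∀ j, (Q j).Nodup ∧ (Q j).IsChain G.Adj ∧ (Q j).head? = some u)
    (hPP : ∀ i i', i ≠ i' → ∀ v ∈ P i, v ∈ P i' → v = u)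
    (hPQ : ∀ i j, ∀ v ∈ P i, v ∈ Q j → v = u)
    (hQQ : ∀ j j', j ≠ j' → ∀ v ∈ Q j, v ∈ Q j' → v = u)
    (hcov : ∀ v, (∃ i, v ∈ P i) ∨ ∃ j, v ∈ Q j) : IsSpider G u (Sum.elim P Q) where
  nodup := by rintro (i | j); exacts [(hP i).1, (hQ j).1]
  isChain := by rintro (i | j); exacts [(hP i).2.1, (hQ j).2.1]
  head? := by rintro (i | j); exacts [(hP i).2.2, (hQ j).2.2]
  eq_of_mem := by
    rintro (i | j) (i' | j') hne v hv hv'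
    · exact hPP i i' (by rintro rfl; exact hne rfl) v hv hv'
    · exact hPQ i j' v hv hv'
    · exact hPQ i' j v hv' hv
    · exact hQQ j j' (by rintro rfl; exact hne rfl) v hv hv'
  cover v := by
    rcases hcov v with ⟨i, hi⟩ | ⟨j, hj⟩
    exacts [⟨.inl i, hi⟩, ⟨.inr j, hj⟩]

def armDepth [DecidableEq V] {ι : Type*} (A : ι → List V) (c : ι) (v : V) : ℕ :=
  if v ∈ A c then (A c).idxOf v else 0

section ArmDepth

variable [DecidableEq V] {ι : Type*} {A : ι → List V}

theorem armDepth_of_mem {c : ι} {v : V} (hv : v ∈ A c) : armDepth A c v = (A c).idxOf v :=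
  if_pos hv

theorem armDepth_le (c : ι) (v : V) : armDepth A c v ≤ (A c).length - 1 := by
  unfold armDepth
  split_ifs with hv
  · have := List.idxOf_lt_length_of_mem hv
    omega
  · exact Nat.zero_le _

end ArmDepth

namespace IsSpider

variable [DecidableEq V] {ι : Type*} {G : SimpleGraph V} {u : V} {A : ι → List V}

theorem idxOf_center (h : IsSpider G u A) (c : ι) : (A c).idxOf u = 0 :=
  (List.idxOf_eq_zero_iff_eq_nil_or_head_eq u).2 (Or.inr (h.head? c))

theorem armDepth_center (h : IsSpider G u A) (c : ι) : armDepth A c u = 0 := by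
  simp [armDepth, h.idxOf_center]

theorem armDepth_eq_zero (h : IsSpider G u A) {c₀ c : ι} {v : V} (hv : v ∈ A c₀)
    (hc : c ≠ c₀) : armDepth A c v = 0 := by
  unfold armDepth
  split_ifs with hvc
  · rw [h.eq_of_mem c c₀ hc v hvc hv, h.idxOf_center]
  · rfl

theorem armDepth_of_getLast? (h : IsSpider G u A) {c : ι} {e : V}
    (he : (A c).getLast? = some e) : armDepth A c e = (A c).length - 1 := by
  rw [armDepth_of_mem (List.mem_of_getLast? he), List.getLast?_eq_getElem?] at *
  obtain ⟨hlt, rfl⟩ := List.getElem?_eq_some_iff.1 he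
  exact (h.nodup c).idxOf_getElem _ hlt

theorem exists_arm_of_adj (h : IsSpider G u A) (hG : G.IsAcyclic) {x y : V} (hxy : G.Adj x y) :
    ∃ c, x ∈ A c ∧ y ∈ A c ∧
      ((A c).idxOf y = (A c).idxOf x + 1 ∨ (A c).idxOf x = (A c).idxOf y + 1) := by
  have hhead : ∀ c c', (A c).head? = (A c').head? := fun c c' => by rw [h.head?, h.head?]
  obtain ⟨c, hx⟩ := h.cover x
  -- Either `y` comes before `x` on the arm of `x`, or the arm of `y` passes through `x` just
  -- before `y`: two paths from `u` to the same vertex coincide in a forest.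
  by_cases hyx : y ∈ (A c).take ((A c).idxOf x + 1)
  · have hy : y ∈ A c := List.mem_of_mem_take hyx
    have hlt : (A c).idxOf y < (A c).idxOf x := by
      have hle := (List.mem_take_iff_idxOf_lt hy).1 hyx
      have hne : (A c).idxOf y ≠ (A c).idxOf x := fun e => hxy.ne ((List.idxOf_inj hy).1 e).symm
      omega
    have hxy' : x ∉ (A c).take ((A c).idxOf y + 1) := by
      rw [List.mem_take_iff_idxOf_lt hx]
      omega
    have e := congrArg List.length <| hG.take_idxOf_succ_eq_append (h.isChain c) (h.isChain c)
      (h.nodup c) (h.nodup c) rfl hy hx hxy.symm hxy'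
    rw [List.length_append, List.length_take_idxOf_succ hx, List.length_take_idxOf_succ hy] at e
    exact ⟨c, hx, hy, Or.inr (by simpa using e)⟩
  · obtain ⟨c', hy⟩ := h.cover y
    have e := hG.take_idxOf_succ_eq_append (h.isChain c) (h.isChain c') (h.nodup c)
      (h.nodup c') (hhead c c') hx hy hxy hyx
    have hx' : x ∈ A c' := List.mem_of_mem_take <|
      e ▸ List.mem_append_left _ ((List.mem_take_iff_idxOf_lt hx).2 (Nat.lt_succ_self _))
    have hidx : (A c').idxOf x = (A c).idxOf x := by
      rcases eq_or_ne c c' with rfl | hcc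
      · rfl
      · rw [h.eq_of_mem c c' hcc x hx hx', h.idxOf_center, h.idxOf_center]
    have hlen := congrArg List.length e
    rw [List.length_append, List.length_take_idxOf_succ hx, List.length_take_idxOf_succ hy] at hlen
    exact ⟨c', hx', hy, Or.inl (by simp at hlen; omega)⟩

theorem exists_armDepth_step (h : IsSpider G u A) (hG : G.IsAcyclic) {x y : V}
    (hxy : x = y ∨ G.Adj x y) :
    ∃ c₀, (∀ c, c ≠ c₀ → armDepth A c x = armDepth A c y) ∧
      armDepth A c₀ x ≤ armDepth A c₀ y + 1 ∧ armDepth A c₀ y ≤ armDepth A c₀ x + 1 := by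
  rcases hxy with rfl | hxy
  · obtain ⟨c₀, -⟩ := h.cover x
    exact ⟨c₀, fun _ _ => rfl, by omega, by omega⟩
  · obtain ⟨c₀, hx, hy, hstep⟩ := h.exists_arm_of_adj hG hxy
    refine ⟨c₀, fun c hc => by rw [h.armDepth_eq_zero hx hc, h.armDepth_eq_zero hy hc], ?_⟩
    rw [armDepth_of_mem hx, armDepth_of_mem hy]
    omega

theorem sum_armDepth_le (h : IsSpider G u A) (D : Finset ι) (v : V) {L : ℕ}
    (hL : ∀ c, (A c).length - 1 ≤ L) : ∑ c ∈ D, armDepth A c v ≤ L := by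
  classical
  obtain ⟨c₀, hv⟩ := h.cover v
  calc ∑ c ∈ D, armDepth A c v ≤ ∑ c ∈ insert c₀ D, armDepth A c v :=
        Finset.sum_le_sum_of_subset (Finset.subset_insert _ _)
    _ = armDepth A c₀ v := Finset.sum_eq_single_of_mem _ (Finset.mem_insert_self _ _)
        fun c _ hc => h.armDepth_eq_zero hv hc
    _ ≤ L := (armDepth_le c₀ v).trans (hL c₀)

theorem sum_two_mul_length_le (h : IsSpider G u A) (hG : G.IsAcyclic) {W : List V}
    (hW : IsWalk G W) (hu : W.head? = some u) {D : Finset ι}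
    (hD : ∀ c ∈ D, ∃ e ∈ W, (A c).getLast? = some e) {L : ℕ}
    (hL : ∀ c, (A c).length - 1 ≤ L) :
    ∑ c ∈ D, 2 * ((A c).length - 1) ≤ wlen W + L := by
  obtain ⟨z, hz⟩ : ∃ z, W.getLast? = some z := ⟨_, List.getLast?_eq_some_getLast hW.1⟩
  have hstep := fun p hp => h.exists_armDepth_step hG (hW.2 p hp)
  have harm : ∀ c ∈ D, 2 * ((A c).length - 1) ≤ numChanges (armDepth A c) W + armDepth A c z := by
    intro c hc
    obtain ⟨e, heW, he⟩ := hD c hc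
    rw [← h.armDepth_of_getLast? he]
    refine two_mul_le_numChanges_add _ (fun p hp => ?_) hu (h.armDepth_center c) heW hz
    obtain ⟨c₀, hother, hle⟩ := hstep p hp
    by_cases hc : c = c₀
    · exact hc ▸ hle
    · rw [hother c hc]
      omega
  have hchanges : ∑ c ∈ D, numChanges (armDepth A c) W ≤ wlen W := by
    refine sum_numChanges_le_wlen _ D W fun p hp c _ c' _ hc hc' => ?_
    obtain ⟨c₀, hother, -⟩ := hstep p hp
    exact (not_imp_comm.1 (hother c) hc).trans (not_imp_comm.1 (hother c') hc').symm
  calc ∑ c ∈ D, 2 * ((A c).length - 1)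
      ≤ ∑ c ∈ D, numChanges (armDepth A c) W + ∑ c ∈ D, armDepth A c z := by
        rw [← Finset.sum_add_distrib]
        exact Finset.sum_le_sum harm
    _ ≤ wlen W + L := add_le_add hchanges (h.sum_armDepth_le D z hL)

end IsSpider

section Partition

variable {m B : ℕ} {a : Fin (3 * m) → ℕ}

theorem threePartition_of_sum_fiber_le (ha : ∀ i, B < 4 * a i ∧ 2 * a i < B)
    (hsum : ∑ i, a i = m * B) (g : Fin (3 * m) → Fin m)
    (hg : ∀ r, ∑ i ∈ univ.filter (fun i => g i = r), a i ≤ B) : ThreePartition m B a := by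
  have hfib : ∀ r, ∑ i ∈ univ.filter (fun i => g i = r), a i = B := by
    have htotal : ∑ r, ∑ i ∈ univ.filter (fun i => g i = r), a i = ∑ _r : Fin m, B := by
      simp [Finset.sum_fiberwise, hsum]
    exact fun r => (sum_eq_sum_iff_of_le fun r _ => hg r).1 htotal r (mem_univ r)
  refine ⟨g, fun r => ?_, hfib⟩
  set J := univ.filter (fun i => g i = r)
  have hB : 0 < B := (Nat.zero_le _).trans_lt (ha ⟨0, by have := r.isLt; omega⟩).2
  have hJ : J.Nonempty := nonempty_of_sum_ne_zero (by rw [hfib r]; omega)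
  have hlt : #J * B < 4 * B := calc
    #J * B = ∑ _i ∈ J, B := by simp
    _ < ∑ i ∈ J, 4 * a i := sum_lt_sum_of_nonempty hJ fun i _ => (ha i).1
    _ = 4 * B := by rw [← mul_sum, hfib r]
  have hgt : 2 * B < #J * B := calc
    2 * B = ∑ i ∈ J, 2 * a i := by rw [← mul_sum, hfib r]
    _ < ∑ _i ∈ J, B := sum_lt_sum_of_nonempty hJ fun i _ => (ha i).2
    _ = #J * B := by simp
  have := Nat.lt_of_mul_lt_mul_right hlt
  have := Nat.lt_of_mul_lt_mul_right hgt
  omega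

theorem threePartition_of_sum_two_mul_le (ha : ∀ i, B < 4 * a i ∧ 2 * a i < B)
    (hsum : ∑ i, a i = m * B) (len : Fin (3 * m) ⊕ Fin m → ℕ)
    (hlenP : ∀ i, len (.inl i) = a i) (hlenQ : ∀ j, len (.inr j) = 2 * m * B)
    (visits : Fin (3 * m) ⊕ Fin m → Fin m → Prop) (hvisits : ∀ c, ∃ r, visits c r)
    (hload : ∀ r (D : Finset (Fin (3 * m) ⊕ Fin m)), (∀ c ∈ D, visits c r) →
      ∑ c ∈ D, 2 * len c ≤ 2 * m * B + 2 * B + 2 * m * B) :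
    ThreePartition m B a := by
  choose σ hσ using fun j => hvisits (.inr j)
  choose g hg using fun i => hvisits (.inl i)
  have hσ_inj : Function.Injective σ := by
    intro j j' hjj'
    by_contra hne
    have hm : 0 < m := j.pos
    have hB : 0 < B := (Nat.zero_le _).trans_lt (ha ⟨0, by omega⟩).2
    have hpair := hload (σ j) {.inr j, .inr j'} <| by
      simp only [mem_insert, mem_singleton]
      rintro c (rfl | rfl)
      exacts [hσ j, hjj' ▸ hσ j']
    rw [sum_pair (by simpa using hne), hlenQ, hlenQ] at hpair
    nlinarith
  obtain ⟨τ, hτ⟩ := (Finite.injective_iff_surjective.1 hσ_inj).hasRightInverse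
  refine threePartition_of_sum_fiber_le ha hsum g fun r => ?_
  have hrobot := hload r (insert (.inr (τ r)) ((univ.filter (fun i => g i = r)).map .inl)) <| by
    simp only [mem_insert, mem_map, mem_filter, mem_univ, true_and, forall_eq_or_imp,
      forall_exists_index, and_imp]
    refine ⟨by simpa only [hτ r] using hσ (τ r), ?_⟩
    rintro _ i rfl rfl
    exact hg i
  rw [sum_insert (by simp), sum_map, hlenQ] at hrobot
  simp only [Function.Embedding.inl_apply, hlenP, ← mul_sum] at hrobot
  omega

end Partition

theorem stmt13_general {V : Type*} [DecidableEq V] (G : SimpleGraph V) (hT : G.IsTree)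
    (m B : ℕ) (a : Fin (3 * m) → ℕ)
    (ha : ∀ i, B < 4 * a i ∧ 2 * a i < B) (hsum : ∑ i, a i = m * B)
    (u : V) (P : Fin (3 * m) → List V) (Q : Fin m → List V)
    (hPpath : ∀ i, (P i).Nodup ∧ (P i).Chain' G.Adj ∧ (P i).head? = some u ∧
      (P i).length = a i + 1)
    (hQpath : ∀ j, (Q j).Nodup ∧ (Q j).Chain' G.Adj ∧ (Q j).head? = some u ∧
      (Q j).length = 2 * m * B + 1)
    (hPP : ∀ i j, i ≠ j → ∀ x, x ∈ P i → x ∈ P j → x = u)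
    (hPQ : ∀ i j, ∀ x, x ∈ P i → x ∈ Q j → x = u)
    (hQQ : ∀ i j, i ≠ j → ∀ x, x ∈ Q i → x ∈ Q j → x = u)
    (hcov : ∀ x : V, (∃ i, x ∈ P i) ∨ (∃ j, x ∈ Q j))
    (S : Fin m → List V) (hwalk : ∀ i, IsWalk G (S i)) (hcovS : Covers S)
    (hstart : ∀ i, (S i).head? = some u)
    (htime : ∀ i, (S i).length - 1 ≤ 2 * m * B + 2 * B) :
    ThreePartition m B a := by
  have hA : IsSpider G u (Sum.elim P Q) :=
    .sum_elim (fun i => ⟨(hPpath i).1, (hPpath i).2.1, (hPpath i).2.2.1⟩)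
      (fun j => ⟨(hQpath j).1, (hQpath j).2.1, (hQpath j).2.2.1⟩) hPP hPQ hQQ hcov
  have hlen : ∀ c, (Sum.elim P Q c).length - 1 ≤ 2 * m * B := by
    rintro (i | j)
    · have := (ha i).2
      have : B ≤ 2 * m * B := Nat.le_mul_of_pos_left B (by have := i.pos; omega)
      rw [Sum.elim_inl, (hPpath i).2.2.2, Nat.add_sub_cancel]
      omega
    · simp [(hQpath j).2.2.2]
  refine threePartition_of_sum_two_mul_le ha hsum (fun c => (Sum.elim P Q c).length - 1)
    (fun i => by simp [(hPpath i).2.2.2]) (fun j => by simp [(hQpath j).2.2.2])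
    (fun c r => ∃ e ∈ S r, (Sum.elim P Q c).getLast? = some e) (fun c => ?_)
    (fun r D hD => ?_)
  · have hne : Sum.elim P Q c ≠ [] := fun h => by simpa [h] using hA.head? c
    obtain ⟨r, hr⟩ := hcovS ((Sum.elim P Q c).getLast hne)
    exact ⟨r, _, hr, List.getLast?_eq_some_getLast hne⟩
  · calc ∑ c ∈ D, 2 * ((Sum.elim P Q c).length - 1) ≤ wlen (S r) + 2 * m * B :=
          hA.sum_two_mul_length_le hT.isAcyclic (hwalk r) (hstart r) hD hlen
      _ ≤ 2 * m * B + 2 * B + 2 * m * B := by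
          grw [wlen_le_length_sub_one, htime r]

/-- MTCP reduction, converse direction: if the star of the 3m paths Pᵢ and the m
paths Qⱼ (each of length L = 2mB) has a covering strategy with m robots starting
at u of time at most L + 2B, then A admits a 3-partition. -/
theorem stmt13 {V : Type*} [Fintype V] [DecidableEq V] (G : SimpleGraph V) (hT : G.IsTree)
    (m B : ℕ) (hm : 1 ≤ m) (a : Fin (3 * m) → ℕ)
    (ha : ∀ i, B < 4 * a i ∧ 2 * a i < B) (hsum : ∑ i, a i = m * B)
    (u : V) (P : Fin (3 * m) → List V) (Q : Fin m → List V)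
    (hPpath : ∀ i, (P i).Nodup ∧ (P i).Chain' G.Adj ∧ (P i).head? = some u ∧
      (P i).length = a i + 1)
    (hQpath : ∀ j, (Q j).Nodup ∧ (Q j).Chain' G.Adj ∧ (Q j).head? = some u ∧
      (Q j).length = 2 * m * B + 1)
    (hPP : ∀ i j, i ≠ j → ∀ x, x ∈ P i → x ∈ P j → x = u)
    (hPQ : ∀ i j, ∀ x, x ∈ P i → x ∈ Q j → x = u)
    (hQQ : ∀ i j, i ≠ j → ∀ x, x ∈ Q i → x ∈ Q j → x = u)
    (hcov : ∀ x : V, (∃ i, x ∈ P i) ∨ (∃ j, x ∈ Q j))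
    (S : Fin m → List V) (hwalk : ∀ i, IsWalk G (S i)) (hcovS : Covers S)
    (hstart : ∀ i, (S i).head? = some u)
    (htime : ∀ i, (S i).length - 1 ≤ 2 * m * B + 2 * B) :
    ThreePartition m B a :=
  stmt13_general G hT m B a ha hsum u P Q hPpath hQpath hPP hPQ hQQ hcov S hwalk hcovS hstart htime
end

section
/- Let A = {a_1,...,a_{3m}} with B/4 < a_i < B/2 and Σ a_i = mB, and let T be the tree formed by 3m paths P_i of length a_i from a vertex u, a path Q of length 3B+3 from a vertex v_1, and the edge (u, v_1). If A admits a 3-partition, then T has a covering strategy with k = m+1 robots starting at v_1 that rendezvous at most every p = 2B+2 steps (and at the end), of total length at most (2m+2)(2B+2). -/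
open Finset

variable {V : Type*}

/-- A motion of k robots: at each time step every robot stays put or moves
along an edge. -/
def IsMotion (G : SimpleGraph V) {k : ℕ} (S : Fin k → ℕ → V) : Prop :=
  ∀ i t, S i t = S i (t + 1) ∨ G.Adj (S i t) (S i (t + 1))

/-- All robots occupy the same vertex at time t. -/
def RendezvousAt {k : ℕ} (S : Fin k → ℕ → V) (t : ℕ) : Prop :=
  ∀ i j, S i t = S j t

/-- A path given as an injective sequence of pairwise adjacent consecutive vertices. -/
def FinChain (G : SimpleGraph V) {n : ℕ} (v : Fin n → V) : Prop :=
  ∀ (m : ℕ) (h : m + 1 < n), G.Adj (v ⟨m, by omega⟩) (v ⟨m + 1, h⟩)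

namespace MLCPRAux

variable {V : Type*}

/-- Down-and-up walk along a sequence of paths, as a function of time. -/
def dwalk {n : ℕ} (u : V) (P : Fin n → List V) (a : Fin n → ℕ) : List (Fin n) → ℕ → V
  | [], _ => u
  | i :: L, s =>
    if s < 2 * a i then (P i).getD (min s (2 * a i - s)) u
    else dwalk u P a L (s - 2 * a i)

variable {n : ℕ} {u : V} {P : Fin n → List V} {a : Fin n → ℕ}

lemma dwalk_zero (ha : ∀ i, 1 ≤ a i) (hh : ∀ i, (P i).getD 0 u = u) :
    ∀ L : List (Fin n), dwalk u P a L 0 = u := by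
  intro L
  cases L with
  | nil => rfl
  | cons i L =>
    have h : (0:ℕ) < 2 * a i := by have := ha i; omega
    have e : min 0 (2 * a i - 0) = 0 := by omega
    simp only [dwalk, if_pos h, e]
    exact hh i

lemma dwalk_ge (L : List (Fin n)) (s : ℕ) (hs : (L.map fun i => 2 * a i).sum ≤ s) :
    dwalk u P a L s = u := by
  induction L generalizing s with
  | nil => rfl
  | cons i L ih =>
    simp only [List.map_cons, List.sum_cons] at hs
    have h1 : ¬ s < 2 * a i := by omega
    simp only [dwalk, h1, if_false]
    exact ih _ (by omega)

lemma dwalk_adj (G : SimpleGraph V) (ha : ∀ i, 1 ≤ a i)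
    (hh : ∀ i, (P i).getD 0 u = u)
    (hstep : ∀ (i : Fin n) (idx : ℕ), idx + 1 ≤ a i →
      G.Adj ((P i).getD idx u) ((P i).getD (idx + 1) u)) :
    ∀ (L : List (Fin n)) (s : ℕ),
      dwalk u P a L s = dwalk u P a L (s + 1) ∨
      G.Adj (dwalk u P a L s) (dwalk u P a L (s + 1)) := by
  intro L
  induction L with
  | nil => intro s; left; rfl
  | cons i L ih =>
    intro s
    by_cases h1 : s + 1 < 2 * a i
    · have h0 : s < 2 * a i := by omega
      simp only [dwalk, h0, if_true, h1, if_true]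
      rcases Nat.lt_trichotomy s (a i) with hs | hs | hs
      · have e1 : min s (2 * a i - s) = s := by omega
        have e2 : min (s + 1) (2 * a i - (s + 1)) = s + 1 := by omega
        rw [e1, e2]
        exact Or.inr (hstep i s (by omega))
      · have e1 : min s (2 * a i - s) = s := by omega
        have e2 : min (s + 1) (2 * a i - (s + 1)) = s - 1 := by omega
        rw [e1, e2]
        have h3 := hstep i (s - 1) (by omega)
        have es : s - 1 + 1 = s := by omega
        rw [es] at h3
        exact Or.inr h3.symm
      · have e1 : min s (2 * a i - s) = 2 * a i - s := by omega
        have e2 : min (s + 1) (2 * a i - (s + 1)) = 2 * a i - s - 1 := by omega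
        rw [e1, e2]
        have h3 := hstep i (2 * a i - s - 1) (by omega)
        have es : 2 * a i - s - 1 + 1 = 2 * a i - s := by omega
        rw [es] at h3
        exact Or.inr h3.symm
    · by_cases h0 : s < 2 * a i
      · -- s + 1 = 2 * a i : step from getD 1 back to u
        simp only [dwalk, h0, if_true, h1, if_false]
        have e1 : min s (2 * a i - s) = 1 := by have := ha i; omega
        have e2 : s + 1 - 2 * a i = 0 := by omega
        rw [e1, e2, dwalk_zero ha hh]
        have h3 := hstep i 0 (ha i)
        rw [hh i] at h3
        exact Or.inr h3.symm
      · have e2 : s - 2 * a i + 1 = s + 1 - 2 * a i := by omega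
        simp only [dwalk, h0, if_false, h1, if_false]
        rw [← e2]
        exact ih _

lemma dwalk_cover (ha : ∀ i, 1 ≤ a i) (hlen : ∀ i, (P i).length = a i + 1) :
    ∀ (L : List (Fin n)) (i : Fin n), i ∈ L → ∀ x ∈ P i,
      ∃ s ≤ (L.map fun i => 2 * a i).sum, dwalk u P a L s = x := by
  intro L
  induction L with
  | nil => intro i hi; simp at hi
  | cons j L ih =>
    intro i hi x hx
    rcases List.mem_cons.mp hi with rfl | hi
    · obtain ⟨idx, hidx, hget⟩ := List.mem_iff_getElem.mp hx
      have hidx' : idx ≤ a i := by have := hlen i; omega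
      refine ⟨idx, ?_, ?_⟩
      · simp only [List.map_cons, List.sum_cons]; omega
      · have hb : idx < 2 * a i := by have := ha i; omega
        have e1 : min idx (2 * a i - idx) = idx := by omega
        simp only [dwalk, hb, if_true, e1]
        rw [List.getD_eq_getElem _ _ (by omega)]
        exact hget
    · obtain ⟨s, hs, hds⟩ := ih i hi x hx
      refine ⟨2 * a j + s, ?_, ?_⟩
      · simp only [List.map_cons, List.sum_cons]; omega
      · have hb : ¬ (2 * a j + s < 2 * a j) := by omega
        simp only [dwalk, hb, if_false]
        have : 2 * a j + s - 2 * a j = s := by omega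
        rw [this, hds]





/-- Trajectory of robot `i` in the covering strategy. -/
def traj (m B : ℕ) (v1 : V) (qf : ℕ → V) (W : ℕ → ℕ → V) (i t : ℕ) : V :=
  if t / (2*B+2) < m then
    (if t / (2*B+2) = i ∧ 0 < t % (2*B+2) then W i (t % (2*B+2) - 1) else v1)
  else if t / (2*B+2) = m then
    (if t % (2*B+2) = 0 then v1 else qf (t % (2*B+2)))
  else if i = m ∧ t / (2*B+2) = m + 1 then
    qf (2*B+2 + min (t % (2*B+2)) (2*B+2 - t % (2*B+2)))
  else qf (2*B+2)

variable {m B : ℕ} {v1 u : V} {qf : ℕ → V} {W : ℕ → ℕ → V}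

lemma traj_spec (i j r : ℕ) (hr : r < 2*B+2) :
    traj m B v1 qf W i (j*(2*B+2)+r) =
      if j < m then (if j = i ∧ 0 < r then W i (r-1) else v1)
      else if j = m then (if r = 0 then v1 else qf r)
      else if i = m ∧ j = m+1 then qf (2*B+2 + min r (2*B+2 - r))
      else qf (2*B+2) := by
  have h1 : (j*(2*B+2)+r) / (2*B+2) = j := by
    rw [mul_comm, Nat.mul_add_div (by omega), Nat.div_eq_of_lt hr, add_zero]
  have h2 : (j*(2*B+2)+r) % (2*B+2) = r := by
    rw [mul_comm, Nat.mul_add_mod, Nat.mod_eq_of_lt hr]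
  simp only [traj, h1, h2]

lemma exists_decomp (t : ℕ) : ∃ j r, r < 2*B+2 ∧ t = j*(2*B+2)+r :=
  ⟨t / (2*B+2), t % (2*B+2), Nat.mod_lt _ (by omega),
    by rw [mul_comm]; exact (Nat.div_add_mod t (2*B+2)).symm⟩

lemma succ_decomp (j r : ℕ) (hr : r + 1 = 2*B+2) :
    j*(2*B+2) + r + 1 = (j+1)*(2*B+2) + 0 := by
  have : (j+1)*(2*B+2) = j*(2*B+2) + (2*B+2) := by ring
  omega

lemma traj_mul (i j : ℕ) :
    traj m B v1 qf W i (j*(2*B+2)) =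
      if j ≤ m then v1 else qf (2*B+2) := by
  have h := traj_spec (m := m) (B := B) (v1 := v1) (qf := qf) (W := W) i j 0 (by omega)
  rw [add_zero] at h
  rw [h]
  rcases lt_trichotomy j m with h1 | h1 | h1
  · rw [if_pos h1, if_neg (show ¬(j = i ∧ 0 < 0) from by omega),
      if_pos (show j ≤ m from by omega)]
  · rw [if_neg (show ¬ j < m from by omega), if_pos h1,
      if_pos (show (0:ℕ) = 0 from rfl), if_pos (show j ≤ m from by omega)]
  · rw [if_neg (show ¬ j < m from by omega), if_neg (show ¬ j = m from by omega),
      if_neg (show ¬ j ≤ m from by omega)]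
    by_cases him2 : i = m ∧ j = m+1
    · rw [if_pos him2]
      congr 1
    · rw [if_neg him2]

lemma traj_motion (G : SimpleGraph V) (hm : 1 ≤ m)
    (huv : G.Adj u v1) (hq0 : qf 0 = v1)
    (hqadj : ∀ nn, nn + 1 ≤ 3*B+3 → G.Adj (qf nn) (qf (nn+1)))
    (hW0 : ∀ i, i < m → W i 0 = u)
    (hWend : ∀ i, i < m → ∀ s, 2*B ≤ s → W i s = u)
    (hWadj : ∀ i, i < m → ∀ s, W i s = W i (s+1) ∨ G.Adj (W i s) (W i (s+1)))
    (i : ℕ) (him : i ≤ m) (t : ℕ) :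
    traj m B v1 qf W i t = traj m B v1 qf W i (t+1) ∨
    G.Adj (traj m B v1 qf W i t) (traj m B v1 qf W i (t+1)) := by
  obtain ⟨j, r, hr, rfl⟩ := exists_decomp (B := B) t
  by_cases hr1 : r + 1 < 2*B+2
  · have e : j*(2*B+2) + r + 1 = j*(2*B+2) + (r+1) := by omega
    rw [traj_spec i j r hr, e, traj_spec i j (r+1) hr1]
    by_cases hjm : j < m
    · simp only [if_pos hjm]
      by_cases hji : j = i
      · by_cases hr0 : 0 < r
        · rw [if_pos ⟨hji, hr0⟩, if_pos ⟨hji, by omega⟩]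
          have h3 := hWadj i (by omega) (r-1)
          have es : r - 1 + 1 = r := by omega
          rw [es] at h3
          have es2 : r + 1 - 1 = r := by omega
          rw [es2]
          exact h3
        · have hr0' : r = 0 := by omega
          rw [if_neg (by omega), if_pos ⟨hji, by omega⟩]
          have : W i (r + 1 - 1) = u := by
            rw [show r + 1 - 1 = 0 by omega]; exact hW0 i (by omega)
          rw [this]
          exact Or.inr huv.symm
      · rw [if_neg (by tauto), if_neg (by tauto)]
        exact Or.inl rfl
    · simp only [if_neg hjm]
      by_cases hjm2 : j = m
      · simp only [if_pos hjm2]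
        by_cases hr0 : r = 0
        · rw [if_pos hr0, if_neg (by omega)]
          subst hr0
          rw [← hq0]
          exact Or.inr (hqadj 0 (by omega))
        · rw [if_neg hr0, if_neg (by omega)]
          exact Or.inr (hqadj r (by omega))
      · simp only [if_neg hjm2]
        by_cases him2 : i = m ∧ j = m + 1
        · simp only [if_pos him2]
          rcases Nat.lt_or_ge r (B+1) with hrB | hrB
          · have e1 : min r (2*B+2 - r) = r := by omega
            have e2 : min (r+1) (2*B+2 - (r+1)) = r + 1 := by omega
            rw [e1, e2, show 2*B+2 + (r+1) = (2*B+2+r) + 1 by omega]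
            exact Or.inr (hqadj (2*B+2+r) (by omega))
          · have e1 : min r (2*B+2 - r) = 2*B+2 - r := by omega
            have e2 : min (r+1) (2*B+2 - (r+1)) = 2*B+2 - (r+1) := by omega
            rw [e1, e2]
            have h3 := hqadj (2*B+2 + (2*B+2 - (r+1))) (by omega)
            rw [show 2*B+2 + (2*B+2 - (r+1)) + 1 = 2*B+2 + (2*B+2 - r) by omega] at h3
            exact Or.inr h3.symm
        · rw [if_neg him2, if_neg him2]
          exact Or.inl rfl
  · have hre : r + 1 = 2*B+2 := by omega
    rw [traj_spec i j r hr, succ_decomp j r hre, add_zero, traj_mul i (j+1)]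
    by_cases hjm : j < m
    · rw [if_pos hjm, if_pos (show j + 1 ≤ m from by omega)]
      by_cases hji : j = i
      · rw [if_pos (show j = i ∧ 0 < r from ⟨hji, by omega⟩)]
        rw [show r - 1 = 2*B from by omega, hWend i (by omega) (2*B) le_rfl]
        exact Or.inr huv
      · rw [if_neg (show ¬(j = i ∧ 0 < r) from by tauto)]
        exact Or.inl rfl
    · by_cases hjm2 : j = m
      · rw [if_neg hjm, if_pos hjm2, if_neg (show ¬ r = 0 from by omega),
          if_neg (show ¬ j + 1 ≤ m from by omega), show r = 2*B+1 from by omega]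
        exact Or.inr (hqadj (2*B+1) (by omega))
      · rw [if_neg hjm, if_neg hjm2, if_neg (show ¬ j + 1 ≤ m from by omega)]
        by_cases him2 : i = m ∧ j = m + 1
        · rw [if_pos him2, show min r (2*B+2 - r) = 1 from by omega]
          exact Or.inr (hqadj (2*B+2) (by omega)).symm
        · rw [if_neg him2]
          exact Or.inl rfl

lemma traj_zero (hm : 1 ≤ m) (i : ℕ) : traj m B v1 qf W i 0 = v1 := by
  have := traj_mul (m := m) (B := B) (v1 := v1) (qf := qf) (W := W) i 0
  rw [zero_mul] at this
  rw [this, if_pos (by omega)]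

lemma traj_ge (i t : ℕ) (ht : (m+2)*(2*B+2) ≤ t) :
    traj m B v1 qf W i t = qf (2*B+2) := by
  obtain ⟨j, r, hr, rfl⟩ := exists_decomp (B := B) t
  have hj : m + 2 ≤ j := by
    by_contra h
    have : j + 1 ≤ m + 2 := by omega
    have h2 : (j+1)*(2*B+2) ≤ (m+2)*(2*B+2) := Nat.mul_le_mul_right _ this
    have h3 : (j+1)*(2*B+2) = j*(2*B+2) + (2*B+2) := by ring
    omega
  rw [traj_spec i j r hr, if_neg (by omega), if_neg (by omega), if_neg (by omega)]

lemma traj_const1 {i : ℕ} (him : i < m) (j r : ℕ) (hr : r < 2*B+2) (hji : j ≠ i) (hjm : j ≠ m) :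
    traj m B v1 qf W i (j*(2*B+2)+r) = traj m B v1 qf W i (j*(2*B+2)+r+1) := by
  by_cases hr1 : r + 1 < 2*B+2
  · have e : j*(2*B+2) + r + 1 = j*(2*B+2) + (r+1) := by omega
    rw [traj_spec i j r hr, e, traj_spec i j (r+1) hr1]
    split_ifs <;> first | rfl | omega
  · have hre : r + 1 = 2*B+2 := by omega
    rw [traj_spec i j r hr, succ_decomp j r hre, traj_spec i (j+1) 0 (by omega)]
    split_ifs <;> first | rfl | omega

lemma traj_const2 (j r : ℕ) (hr : r < 2*B+2) (hjm : j ≠ m) (hjm1 : j ≠ m + 1) :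
    traj m B v1 qf W m (j*(2*B+2)+r) = traj m B v1 qf W m (j*(2*B+2)+r+1) := by
  by_cases hr1 : r + 1 < 2*B+2
  · have e : j*(2*B+2) + r + 1 = j*(2*B+2) + (r+1) := by omega
    rw [traj_spec m j r hr, e, traj_spec m j (r+1) hr1]
    split_ifs <;> first | rfl | omega
  · have hre : r + 1 = 2*B+2 := by omega
    rw [traj_spec m j r hr, succ_decomp j r hre, traj_spec m (j+1) 0 (by omega)]
    split_ifs <;> first | rfl | omega




lemma card_slice (N p j0 : ℕ) (hp : 0 < p) :
    ((Finset.range N).filter (fun t => t / p = j0)).card ≤ p := by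
  classical
  have : ((Finset.range N).filter (fun t => t / p = j0)).card ≤ (Finset.range p).card :=
    Finset.card_le_card_of_injOn (fun t => t % p)
      (fun t _ => Finset.mem_range.mpr (Nat.mod_lt _ hp)) ?_
  · simpa using this
  · intro t1 h1 t2 h2 he
    simp only [Finset.coe_filter, Set.mem_setOf_eq, Finset.mem_range] at h1 h2
    have d1 := Nat.div_add_mod t1 p
    have d2 := Nat.div_add_mod t2 p
    simp only at he
    rw [← d1, ← d2, h1.2, h2.2, he]

lemma sum_toList {α M : Type*} [AddCommMonoid M] (s : Finset α) (g : α → M) :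
    (s.toList.map g).sum = ∑ i ∈ s, g i := by
  rw [Finset.sum, ← Multiset.coe_toList s.val, Multiset.map_coe, Multiset.sum_coe]
  rfl


end MLCPRAux

/-- MLCPR reduction, forward direction: if A admits a 3-partition then the tree made of
the 3m paths Pᵢ from u, the path Q of length 3B+3 from v₁ and the edge (u,v₁) has a
covering strategy with m+1 robots starting at v₁, rendezvousing at most every
2B+2 steps and at the end, of total length at most (2m+2)(2B+2). -/
theorem stmt16 {V : Type*} [Fintype V] [DecidableEq V] (G : SimpleGraph V) (hT : G.IsTree)
    (m B : ℕ) (hm : 1 ≤ m) (a : Fin (3 * m) → ℕ)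
    (ha : ∀ i, B < 4 * a i ∧ 2 * a i < B) (hsum : ∑ i, a i = m * B)
    (u v1 : V) (huv : G.Adj u v1)
    (P : Fin (3 * m) → List V)
    (hPpath : ∀ i, (P i).Nodup ∧ (P i).Chain' G.Adj ∧ (P i).head? = some u ∧
      (P i).length = a i + 1)
    (Qv : Fin (3 * B + 4) → V) (hQinj : Function.Injective Qv) (hQchain : FinChain G Qv)
    (hQ0 : Qv ⟨0, by omega⟩ = v1)
    (hPP : ∀ i j, i ≠ j → ∀ x, x ∈ P i → x ∈ P j → x = u)
    (hPQ : ∀ i x, x ∈ P i → ¬ ∃ n, Qv n = x)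
    (hcov : ∀ x : V, (∃ i, x ∈ P i) ∨ (∃ n, Qv n = x))
    (hpart : ThreePartition m B a) :
    ∃ (S : Fin (m + 1) → ℕ → V) (Tend : ℕ),
      IsMotion G S ∧
      (∀ i, S i 0 = v1) ∧
      (∀ i t, Tend ≤ t → S i t = S i Tend) ∧
      RendezvousAt S Tend ∧
      (∀ t, RendezvousAt S t → t < Tend →
        ∃ t', t < t' ∧ t' ≤ t + (2 * B + 2) ∧ RendezvousAt S t') ∧
      (∀ x : V, ∃ i t, S i t = x) ∧
      (∑ i : Fin (m + 1),
        ((Finset.range Tend).filter (fun t => S i t ≠ S i (t + 1))).card) ≤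
        (2 * m + 2) * (2 * B + 2) := by
  classical
  obtain ⟨f, hf3, hfB⟩ := hpart
  have ha1 : ∀ i, 1 ≤ a i := fun i => by have := ha i; omega
  have hB3 : 3 ≤ B := by
    have h1 := ha ⟨0, by omega⟩
    have h2 := ha1 ⟨0, by omega⟩
    omega
  have hlen : ∀ i, (P i).length = a i + 1 := fun i => (hPpath i).2.2.2
  have hPu : ∀ i, (P i).getD 0 u = u := by
    intro i
    obtain ⟨-, -, hh, -⟩ := hPpath i
    cases hP : P i with
    | nil => rw [hP] at hh; exact absurd hh (by simp)
    | cons b L =>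
      rw [hP] at hh
      simp only [List.head?_cons, Option.some.injEq] at hh
      simp [hh]
  have hstep : ∀ (i : Fin (3*m)) (idx : ℕ), idx + 1 ≤ a i →
      G.Adj ((P i).getD idx u) ((P i).getD (idx+1) u) := by
    intro i idx hidx
    obtain ⟨-, hch, -, -⟩ := hPpath i
    have h1 : idx + 1 < (P i).length := by rw [hlen i]; omega
    rw [List.getD_eq_getElem _ _ (by omega : idx < (P i).length),
      List.getD_eq_getElem _ _ h1]
    have := List.isChain_iff_getElem.mp hch idx (by omega)
    simpa [List.get_eq_getElem] using this
  -- the vertical walk function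
  obtain ⟨qf, hq0, hqadj, hqv⟩ : ∃ qf : ℕ → V, (qf 0 = v1) ∧
      (∀ k, k + 1 ≤ 3*B+3 → G.Adj (qf k) (qf (k+1))) ∧
      (∀ k (h : k < 3*B+4), qf k = Qv ⟨k, h⟩) := by
    refine ⟨fun k => Qv ⟨min k (3*B+3), by omega⟩, ?_, ?_, ?_⟩
    · beta_reduce
      have e : (⟨min 0 (3*B+3), by omega⟩ : Fin (3*B+4)) = ⟨0, by omega⟩ := by
        apply Fin.ext; simp
      rw [e, hQ0]
    · intro k hk
      beta_reduce
      have e1 : (⟨min k (3*B+3), by omega⟩ : Fin (3*B+4)) = ⟨k, by omega⟩ := by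
        apply Fin.ext; simp; omega
      have e2 : (⟨min (k+1) (3*B+3), by omega⟩ : Fin (3*B+4)) = ⟨k+1, by omega⟩ := by
        apply Fin.ext; simp; omega
      rw [e1, e2]
      exact hQchain k (by omega)
    · intro k h
      beta_reduce
      have e1 : (⟨min k (3*B+3), by omega⟩ : Fin (3*B+4)) = ⟨k, h⟩ := by
        apply Fin.ext; simp; omega
      rw [e1]
  -- the horizontal walk functions
  obtain ⟨W, hW0, hWend, hWadj, hWcov⟩ : ∃ W : ℕ → ℕ → V,
      (∀ j, j < m → W j 0 = u) ∧
      (∀ j, j < m → ∀ s, 2*B ≤ s → W j s = u) ∧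
      (∀ j, j < m → ∀ s, W j s = W j (s+1) ∨ G.Adj (W j s) (W j (s+1))) ∧
      (∀ i0 : Fin (3*m), ∀ x ∈ P i0, ∃ s ≤ 2*B, W (f i0 : ℕ) s = x) := by
    have hLsum : ∀ (j : Fin m),
        (((Finset.univ.filter (fun i => f i = j)).toList).map (fun i => 2 * a i)).sum
          = 2*B := by
      intro j
      rw [MLCPRAux.sum_toList, ← Finset.mul_sum, hfB j]
    refine ⟨fun j s => if h : j < m then
        MLCPRAux.dwalk u P a ((Finset.univ.filter (fun i => f i = ⟨j, h⟩)).toList) s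
      else u, ?_, ?_, ?_, ?_⟩
    · intro j hj
      beta_reduce
      rw [dif_pos hj]
      exact MLCPRAux.dwalk_zero ha1 hPu _
    · intro j hj s hs
      beta_reduce
      rw [dif_pos hj]
      exact MLCPRAux.dwalk_ge _ _ (by rw [hLsum ⟨j, hj⟩]; exact hs)
    · intro j hj s
      beta_reduce
      rw [dif_pos hj, dif_pos hj]
      exact MLCPRAux.dwalk_adj G ha1 hPu hstep _ s
    · intro i0 x hx
      beta_reduce
      obtain ⟨s, hs, hd⟩ := MLCPRAux.dwalk_cover (u := u) ha1 hlen
        ((Finset.univ.filter (fun i => f i = f i0)).toList) i0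
        (Finset.mem_toList.mpr (Finset.mem_filter.mpr ⟨Finset.mem_univ _, rfl⟩)) x hx
      rw [hLsum (f i0)] at hs
      refine ⟨s, hs, ?_⟩
      rw [dif_pos (f i0).isLt]
      simp only [Fin.eta]
      exact hd
  have him : ∀ i : Fin (m+1), (i : ℕ) ≤ m := fun i => Nat.lt_succ_iff.mp i.isLt
  refine ⟨fun i t => MLCPRAux.traj m B v1 qf W (i : ℕ) t, (m+2)*(2*B+2),
    ?_, ?_, ?_, ?_, ?_, ?_, ?_⟩
  · -- IsMotion
    intro i t
    exact MLCPRAux.traj_motion G hm huv hq0 hqadj hW0 hWend hWadj (i : ℕ) (him i) t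
  · -- start at v1
    intro i
    exact MLCPRAux.traj_zero hm _
  · -- stationary after Tend
    intro i t ht
    show MLCPRAux.traj m B v1 qf W (i : ℕ) t
      = MLCPRAux.traj m B v1 qf W (i : ℕ) ((m+2)*(2*B+2))
    rw [MLCPRAux.traj_ge _ _ ht, MLCPRAux.traj_ge _ _ le_rfl]
  · -- rendezvous at Tend
    intro i1 i2
    show MLCPRAux.traj m B v1 qf W (i1 : ℕ) ((m+2)*(2*B+2))
      = MLCPRAux.traj m B v1 qf W (i2 : ℕ) ((m+2)*(2*B+2))
    rw [MLCPRAux.traj_mul, MLCPRAux.traj_mul]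
  · -- rendezvous gap
    intro t _ _
    obtain ⟨j, r, hr, rfl⟩ := MLCPRAux.exists_decomp (B := B) t
    refine ⟨(j+1)*(2*B+2), ?_, ?_, ?_⟩
    · have e : (j+1)*(2*B+2) = j*(2*B+2) + (2*B+2) := by ring
      omega
    · have e : (j+1)*(2*B+2) = j*(2*B+2) + (2*B+2) := by ring
      omega
    · intro i1 i2
      show MLCPRAux.traj m B v1 qf W (i1 : ℕ) ((j+1)*(2*B+2))
        = MLCPRAux.traj m B v1 qf W (i2 : ℕ) ((j+1)*(2*B+2))
      rw [MLCPRAux.traj_mul, MLCPRAux.traj_mul]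
  · -- coverage
    intro x
    rcases hcov x with ⟨i0, hx⟩ | ⟨nn, hx⟩
    · obtain ⟨s, hs, hd⟩ := hWcov i0 x hx
      refine ⟨⟨(f i0 : ℕ), by omega⟩, (f i0 : ℕ)*(2*B+2) + (s+1), ?_⟩
      show MLCPRAux.traj m B v1 qf W (f i0 : ℕ) ((f i0 : ℕ)*(2*B+2) + (s+1)) = x
      rw [MLCPRAux.traj_spec _ _ _ (show s+1 < 2*B+2 by omega),
        if_pos (f i0).isLt, if_pos ⟨rfl, Nat.succ_pos s⟩,
        show s + 1 - 1 = s from rfl]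
      exact hd
    · have hk : (nn : ℕ) < 3*B+4 := nn.isLt
      have hqk : qf (nn : ℕ) = x := by
        rw [hqv (nn : ℕ) hk]
        rw [show (⟨(nn : ℕ), hk⟩ : Fin (3*B+4)) = nn from Fin.ext rfl]
        exact hx
      rcases Nat.lt_or_ge (nn : ℕ) 1 with h0 | h1
      · refine ⟨⟨0, by omega⟩, 0, ?_⟩
        show MLCPRAux.traj m B v1 qf W ((0 : ℕ)) 0 = x
        rw [MLCPRAux.traj_zero hm, ← hq0, show (0:ℕ) = (nn:ℕ) from by omega]
        exact hqk
      · rcases Nat.lt_or_ge (nn : ℕ) (2*B+2) with h2 | h2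
        · refine ⟨⟨0, by omega⟩, m*(2*B+2) + (nn : ℕ), ?_⟩
          show MLCPRAux.traj m B v1 qf W ((0 : ℕ)) (m*(2*B+2) + (nn : ℕ)) = x
          rw [MLCPRAux.traj_spec _ _ _ h2, if_neg (lt_irrefl m), if_pos rfl,
            if_neg (show ¬ (nn : ℕ) = 0 by omega)]
          exact hqk
        · refine ⟨⟨m, by omega⟩, (m+1)*(2*B+2) + ((nn : ℕ) - (2*B+2)), ?_⟩
          show MLCPRAux.traj m B v1 qf W m ((m+1)*(2*B+2) + ((nn : ℕ) - (2*B+2))) = x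
          rw [MLCPRAux.traj_spec _ _ _ (show (nn : ℕ) - (2*B+2) < 2*B+2 by omega),
            if_neg (show ¬ m + 1 < m by omega), if_neg (show ¬ m + 1 = m by omega),
            if_pos ⟨rfl, rfl⟩,
            show 2*B+2 + min ((nn : ℕ) - (2*B+2)) (2*B+2 - ((nn : ℕ) - (2*B+2)))
              = (nn : ℕ) from by omega]
          exact hqk
  · -- total length
    show ∑ i : Fin (m+1), ((Finset.range ((m+2)*(2*B+2))).filter
        (fun t => MLCPRAux.traj m B v1 qf W (i : ℕ) t ≠
          MLCPRAux.traj m B v1 qf W (i : ℕ) (t+1))).card ≤ (2*m+2)*(2*B+2)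
    have hbound : ∀ i : Fin (m+1), ((Finset.range ((m+2)*(2*B+2))).filter
        (fun t => MLCPRAux.traj m B v1 qf W (i : ℕ) t ≠
          MLCPRAux.traj m B v1 qf W (i : ℕ) (t+1))).card ≤ 2*(2*B+2) := by
      intro i
      have hd : ∀ t : ℕ, (t/(2*B+2))*(2*B+2) + t % (2*B+2) = t := by
        intro t
        rw [mul_comm]
        exact Nat.div_add_mod t (2*B+2)
      by_cases hi : (i : ℕ) < m
      · have hsub : (Finset.range ((m+2)*(2*B+2))).filter
            (fun t => MLCPRAux.traj m B v1 qf W (i : ℕ) t ≠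
              MLCPRAux.traj m B v1 qf W (i : ℕ) (t+1)) ⊆
            ((Finset.range ((m+2)*(2*B+2))).filter (fun t => t/(2*B+2) = (i : ℕ))) ∪
            ((Finset.range ((m+2)*(2*B+2))).filter (fun t => t/(2*B+2) = m)) := by
          intro t ht
          rw [Finset.mem_filter] at ht
          obtain ⟨htr, hne⟩ := ht
          rw [Finset.mem_union, Finset.mem_filter, Finset.mem_filter]
          by_cases h1 : t/(2*B+2) = (i : ℕ)
          · exact Or.inl ⟨htr, h1⟩
          by_cases h2 : t/(2*B+2) = m
          · exact Or.inr ⟨htr, h2⟩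
          exfalso
          have hc := MLCPRAux.traj_const1 (v1 := v1) (qf := qf) (W := W) hi
            (t/(2*B+2)) (t % (2*B+2)) (Nat.mod_lt _ (by omega)) h1 h2
          rw [hd t] at hc
          exact hne hc
        refine le_trans (Finset.card_le_card hsub) (le_trans (Finset.card_union_le _ _) ?_)
        have c1 := MLCPRAux.card_slice ((m+2)*(2*B+2)) (2*B+2) (i : ℕ) (by omega)
        have c2 := MLCPRAux.card_slice ((m+2)*(2*B+2)) (2*B+2) m (by omega)
        omega
      · have hieq : (i : ℕ) = m := by have := him i; omega
        have hsub : (Finset.range ((m+2)*(2*B+2))).filter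
            (fun t => MLCPRAux.traj m B v1 qf W (i : ℕ) t ≠
              MLCPRAux.traj m B v1 qf W (i : ℕ) (t+1)) ⊆
            ((Finset.range ((m+2)*(2*B+2))).filter (fun t => t/(2*B+2) = m)) ∪
            ((Finset.range ((m+2)*(2*B+2))).filter (fun t => t/(2*B+2) = m+1)) := by
          intro t ht
          rw [Finset.mem_filter] at ht
          obtain ⟨htr, hne⟩ := ht
          rw [Finset.mem_union, Finset.mem_filter, Finset.mem_filter]
          by_cases h1 : t/(2*B+2) = m
          · exact Or.inl ⟨htr, h1⟩
          by_cases h2 : t/(2*B+2) = m+1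
          · exact Or.inr ⟨htr, h2⟩
          exfalso
          rw [hieq] at hne
          have hc := MLCPRAux.traj_const2 (v1 := v1) (qf := qf) (W := W)
            (t/(2*B+2)) (t % (2*B+2)) (Nat.mod_lt _ (by omega)) h1 h2
          rw [hd t] at hc
          exact hne hc
        refine le_trans (Finset.card_le_card hsub) (le_trans (Finset.card_union_le _ _) ?_)
        have c1 := MLCPRAux.card_slice ((m+2)*(2*B+2)) (2*B+2) m (by omega)
        have c2 := MLCPRAux.card_slice ((m+2)*(2*B+2)) (2*B+2) (m+1) (by omega)
        omega
    refine le_trans (Finset.sum_le_sum (fun i _ => hbound i)) ?_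
    rw [Finset.sum_const, Finset.card_univ, Fintype.card_fin, smul_eq_mul]
    have : (m+1) * (2*(2*B+2)) = (2*m+2)*(2*B+2) := by ring
    omega
end
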